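/- Under the GOSPAL mechanism, if user i is not allocated when bidding r_i but is allocated when overbidding q_i = r_i + Δ (Δ > 0), then the price it pays satisfies p_i ≥ r_i, so its utility from overbidding is at most 0, which is the utility from truthful bidding. -/

import Mathlib

/-! At the overbid the optimum `ω₂` allocates `i`, so its value exceeds the value of `ω₂` at the
truthful bid by exactly `Δ`, and the latter is at most the truthful optimum. That optimum `ω₁`
does not allocate `i`, so it keeps its value when `i` bids `0`. Hence `Ũ*` drops by at most `Δ`
when the overbid is replaced by `0`, which is exactly `p_i ≥ r`. -/

open Finset

/-- Perceived social utility of the (bid-independent) allocation `A ω` under bids `q`. -/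
def Ut {V Ω : Type*} (A : Ω → Finset V) (q : V → ℝ) (ω : Ω) : ℝ := ∑ j ∈ A ω, q j

/-- Maximum perceived social utility over all group orderings. -/
noncomputable def Ustar {V Ω : Type*} [Fintype Ω] [Nonempty Ω]
    (A : Ω → Finset V) (q : V → ℝ) : ℝ :=
  Finset.univ.sup' Finset.univ_nonempty (fun ω => Ut A q ω)

/-- GOSPAL price for user `i` under bids `q`, when the ordering `ω` is selected:
`p_i(q) = (lim_{ε→0⁺} Ũ*(q_{-i}(ε)) − (Ũ*(q) − q_i)) · x_i(ω)`; the limit term equals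
`Ũ*` evaluated with user `i`'s bid set to `0` (by continuity of `Ũ*`). -/
noncomputable def price {V Ω : Type*} [Fintype Ω] [Nonempty Ω] [DecidableEq V]
    (A : Ω → Finset V) (q : V → ℝ) (i : V) (ω : Ω) : ℝ :=
  (Ustar A (Function.update q i 0) - (Ustar A q - q i)) * (if i ∈ A ω then 1 else 0)

section Allocation

variable {V Ω : Type*} [DecidableEq V] (A : Ω → Finset V)

theorem Ut_update_of_notMem {q : V → ℝ} {i : V} {ω : Ω} (h : i ∉ A ω) (v : ℝ) :
    Ut A (Function.update q i v) ω = Ut A q ω :=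
  sum_update_of_notMem h q v

theorem Ut_update_add_of_mem {q : V → ℝ} {i : V} {ω : Ω} (h : i ∈ A ω) (v d : ℝ) :
    Ut A (Function.update q i (v + d)) ω = Ut A (Function.update q i v) ω + d := by
  simp only [Ut, sum_update_of_mem h]
  ring

end Allocation

section Optimum

variable {V Ω : Type*} [Fintype Ω] [Nonempty Ω] (A : Ω → Finset V)

theorem Ut_le_Ustar (q : V → ℝ) (ω : Ω) : Ut A q ω ≤ Ustar A q :=
  le_sup' (fun ω => Ut A q ω) (mem_univ ω)

theorem Ustar_eq_Ut_of_forall_le {q : V → ℝ} {ω₀ : Ω} (h : ∀ ω, Ut A q ω ≤ Ut A q ω₀) :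
    Ustar A q = Ut A q ω₀ :=
  le_antisymm (sup'_le _ _ fun ω _ => h ω) (Ut_le_Ustar A q ω₀)

theorem price_of_mem [DecidableEq V] {q : V → ℝ} {i : V} {ω : Ω} (h : i ∈ A ω) :
    price A q i ω = Ustar A (Function.update q i 0) - Ustar A q + q i := by
  rw [price, if_pos h, mul_one]
  ring

end Optimum

theorem gospal_overbid_price_ge_valuation_general {V Ω : Type*} [Fintype Ω]
    [Nonempty Ω] [DecidableEq V]
    (A : Ω → Finset V) (q : V → ℝ) (i : V) (r Δ : ℝ)
    (ω₁ ω₂ : Ω)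
    (hmax₁ : ∀ ω : Ω, Ut A (Function.update q i r) ω ≤ Ut A (Function.update q i r) ω₁)
    (hmax₂ : ∀ ω : Ω, Ut A (Function.update q i (r + Δ)) ω ≤
        Ut A (Function.update q i (r + Δ)) ω₂)
    (hnotalloc : i ∉ A ω₁) (halloc : i ∈ A ω₂) :
    r ≤ price A (Function.update q i (r + Δ)) i ω₂ ∧
    (r - price A (Function.update q i (r + Δ)) i ω₂) *
      (if i ∈ A ω₂ then 1 else 0) ≤ 0 := by
  have hoverbid : Ustar A (Function.update q i (r + Δ)) ≤ Ustar A (Function.update q i 0) + Δ :=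
    calc Ustar A (Function.update q i (r + Δ))
        = Ut A (Function.update q i r) ω₂ + Δ := by
          rw [Ustar_eq_Ut_of_forall_le A hmax₂, Ut_update_add_of_mem A halloc]
      _ ≤ Ut A (Function.update q i r) ω₁ + Δ := by gcongr; exact hmax₁ ω₂
      _ = Ut A (Function.update q i 0) ω₁ + Δ := by
          rw [Ut_update_of_notMem A hnotalloc, Ut_update_of_notMem A hnotalloc]
      _ ≤ Ustar A (Function.update q i 0) + Δ := by gcongr; exact Ut_le_Ustar A _ ω₁
  have hprice : r ≤ price A (Function.update q i (r + Δ)) i ω₂ := by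
    rw [price_of_mem A halloc, Function.update_idem, Function.update_self]
    linarith
  exact ⟨hprice, by rw [if_pos halloc, mul_one]; linarith⟩

/-- If user `i` is not allocated when bidding its true value `r` (under a
utility-maximizing ordering) but is allocated when overbidding `r + Δ` (`Δ > 0`), then
the price it pays satisfies `p_i ≥ r`, so its utility from overbidding is at most `0`,
the utility from truthful bidding. -/
theorem gospal_overbid_price_ge_valuation {V Ω : Type*} [Fintype V] [Fintype Ω]
    [Nonempty Ω] [DecidableEq V]
    (A : Ω → Finset V) (q : V → ℝ) (i : V) (r Δ : ℝ) (hr : 0 < r) (hΔ : 0 < Δ)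
    (ω₁ ω₂ : Ω)
    (hmax₁ : ∀ ω : Ω, Ut A (Function.update q i r) ω ≤ Ut A (Function.update q i r) ω₁)
    (hmax₂ : ∀ ω : Ω, Ut A (Function.update q i (r + Δ)) ω ≤
        Ut A (Function.update q i (r + Δ)) ω₂)
    (hnotalloc : i ∉ A ω₁) (halloc : i ∈ A ω₂) :
    r ≤ price A (Function.update q i (r + Δ)) i ω₂ ∧
    (r - price A (Function.update q i (r + Δ)) i ω₂) *
      (if i ∈ A ω₂ then 1 else 0) ≤ 0 :=
  gospal_overbid_price_ge_valuation_general A q i r Δ ω₁ ω₂ hmax₁ hmax₂ hnotalloc halloc
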